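/- Let n ≥ 1, let V and E be finite-dimensional real inner product spaces, and let A(D) be a homogeneous constant-coefficient linear differential operator of order k ≥ 1 from V to E on ℝⁿ which is injectively elliptic, with symbol A(ξ) : V → E. Define for each ξ ∈ ℝⁿ \ {0} the linear map L(ξ) : E → E by L(ξ) := det(A(ξ)* ∘ A(ξ)) · (id_E − A(ξ) ∘ (A(ξ)* ∘ A(ξ))⁻¹ ∘ A(ξ)*), where A(ξ)* : E → V is the adjoint of A(ξ). Then: (i) each matrix entry of L(ξ) (with respect to any fixed basis of E) is a homogeneous polynomial of degree 2k·dim V in ξ, so that ξ ↦ L(ξ) extends to a polynomial map on all of ℝⁿ; and (ii) for every ξ ∈ ℝⁿ \ {0}, ker L(ξ) = A(ξ)[V], the range of A(ξ). -/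

import Mathlib

/-!
In orthonormal bases the symbol `A(ξ)` has a matrix `T(ξ)` whose entries are homogeneous
polynomials of degree `k` in `ξ`, and `A(ξ)*` has matrix `T(ξ)ᵀ`. As `det G • G⁻¹ = adj G`, the
matrix of `L(ξ)` is `det (TᵀT) • 1 - T adj (TᵀT) Tᵀ`, which is homogeneous of degree
`2k · dim V` entrywise; a change of basis only multiplies by constant matrices. For the kernel,
`det (A*A) ≠ 0` and `1 - A (A*A)⁻¹ A*` kills `A v` while its complementary part lands in `range A`.
-/

open MeasureTheory

/-- The symmetric tensor `ξ^{⊗k} ⊗ v`, viewed as the continuous `k`-linear map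
`(h₁, …, h_k) ↦ (ξ·h₁)⋯(ξ·h_k) v`, linearly in `v`. -/
noncomputable def tensorPow {n : ℕ} (k : ℕ) {V : Type*} [NormedAddCommGroup V] [NormedSpace ℝ V]
    (ξ : EuclideanSpace ℝ (Fin n)) :
    V →ₗ[ℝ] ContinuousMultilinearMap ℝ (fun _ : Fin k => EuclideanSpace ℝ (Fin n)) V where
  toFun v := (ContinuousMultilinearMap.mkPiRing ℝ (Fin k) v).compContinuousLinearMap
      (fun _ => innerSL ℝ ξ)
  map_add' v w := by
    ext m
    simp only [ContinuousMultilinearMap.compContinuousLinearMap_apply,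
      ContinuousMultilinearMap.mkPiRing_apply, ContinuousMultilinearMap.add_apply, smul_add]
  map_smul' c v := by
    ext m
    simp only [ContinuousMultilinearMap.compContinuousLinearMap_apply,
      ContinuousMultilinearMap.mkPiRing_apply, ContinuousMultilinearMap.smul_apply,
      RingHom.id_apply]
    rw [smul_comm]

/-- The symbol `A(ξ) : V → E` of the homogeneous constant-coefficient differential operator
of order `k` given by the linear map `A` on symmetric `k`-linear maps:
`A(ξ)[v] = A[(h₁,…,h_k) ↦ (ξ·h₁)⋯(ξ·h_k) v]`. -/
noncomputable def symbol {n k : ℕ} {V E : Type*} [NormedAddCommGroup V] [NormedSpace ℝ V]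
    [NormedAddCommGroup E] [NormedSpace ℝ E]
    (A : ContinuousMultilinearMap ℝ (fun _ : Fin k => EuclideanSpace ℝ (Fin n)) V →ₗ[ℝ] E)
    (ξ : EuclideanSpace ℝ (Fin n)) : V →ₗ[ℝ] E :=
  A ∘ₗ tensorPow k ξ

/-- The symbol as a continuous linear map (all linear maps between finite-dimensional spaces
are continuous). -/
noncomputable def symbolL {n k : ℕ} {V E : Type*}
    [NormedAddCommGroup V] [InnerProductSpace ℝ V] [FiniteDimensional ℝ V]
    [NormedAddCommGroup E] [InnerProductSpace ℝ E] [FiniteDimensional ℝ E]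
    (A : ContinuousMultilinearMap ℝ (fun _ : Fin k => EuclideanSpace ℝ (Fin n)) V →ₗ[ℝ] E)
    (ξ : EuclideanSpace ℝ (Fin n)) : V →L[ℝ] E :=
  LinearMap.toContinuousLinearMap (symbol A ξ)

/-- The operator `L(ξ) = det(A(ξ)* ∘ A(ξ)) • (id_E - A(ξ) ∘ (A(ξ)* ∘ A(ξ))⁻¹ ∘ A(ξ)*)`;
here the inverse is taken via `Ring.inverse`, which is the genuine inverse whenever
`A(ξ)* ∘ A(ξ)` is invertible (as guaranteed by injective ellipticity for `ξ ≠ 0`). -/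
noncomputable def cocSymbol {n k : ℕ} {V E : Type*}
    [NormedAddCommGroup V] [InnerProductSpace ℝ V] [FiniteDimensional ℝ V]
    [NormedAddCommGroup E] [InnerProductSpace ℝ E] [FiniteDimensional ℝ E]
    (A : ContinuousMultilinearMap ℝ (fun _ : Fin k => EuclideanSpace ℝ (Fin n)) V →ₗ[ℝ] E)
    (ξ : EuclideanSpace ℝ (Fin n)) : E →L[ℝ] E :=
  LinearMap.det (((ContinuousLinearMap.adjoint (symbolL A ξ)).comp (symbolL A ξ)
      : V →L[ℝ] V) : V →ₗ[ℝ] V) •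
    (ContinuousLinearMap.id ℝ E -
      (symbolL A ξ).comp
        ((Ring.inverse ((ContinuousLinearMap.adjoint (symbolL A ξ)).comp (symbolL A ξ))).comp
          (ContinuousLinearMap.adjoint (symbolL A ξ))))

namespace Matrix

open MvPolynomial

variable {σ R : Type*} [CommRing R] {m n p : Type*} [Fintype n]

theorem isHomogeneous_mul {M : Matrix m n (MvPolynomial σ R)} {N : Matrix n p (MvPolynomial σ R)}
    {a b : ℕ} (hM : ∀ i j, (M i j).IsHomogeneous a) (hN : ∀ i j, (N i j).IsHomogeneous b)
    (i : m) (j : p) : ((M * N) i j).IsHomogeneous (a + b) :=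
  IsHomogeneous.sum _ _ _ fun l _ => (hM i l).mul (hN l j)

variable [DecidableEq n]

theorem isHomogeneous_det_of_rows {M : Matrix n n (MvPolynomial σ R)} (d : n → ℕ)
    (hM : ∀ i j, (M i j).IsHomogeneous (d i)) : M.det.IsHomogeneous (∑ i, d i) := by
  rw [det_apply]
  refine IsHomogeneous.sum _ _ _ fun τ _ => ?_
  have hprod : (∏ i, M (τ i) i).IsHomogeneous (∑ i, d i) := by
    rw [← Equiv.sum_comp τ d]
    exact IsHomogeneous.prod _ _ _ fun i _ => hM (τ i) i
  rcases Int.units_eq_one_or (Equiv.Perm.sign τ) with hτ | hτ <;> rw [hτ]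
  · simpa using hprod
  · simpa using hprod.neg

theorem isHomogeneous_det {M : Matrix n n (MvPolynomial σ R)} {a : ℕ}
    (hM : ∀ i j, (M i j).IsHomogeneous a) : M.det.IsHomogeneous (Fintype.card n * a) := by
  simpa using isHomogeneous_det_of_rows (fun _ => a) hM

theorem isHomogeneous_adjugate {M : Matrix n n (MvPolynomial σ R)} {a : ℕ}
    (hM : ∀ i j, (M i j).IsHomogeneous a) (i j : n) :
    (M.adjugate i j).IsHomogeneous ((Fintype.card n - 1) * a) := by
  rw [adjugate_apply]
  have hrows : ∀ i' l, ((M.updateRow j (Pi.single i 1)) i' l).IsHomogeneous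
      (if i' = j then 0 else a) := by
    intro i' l
    by_cases hi' : i' = j
    · subst hi'
      rw [if_pos rfl, updateRow_self]
      by_cases hl : l = i
      · subst hl
        simpa using isHomogeneous_one σ R
      · simpa [hl] using isHomogeneous_zero σ R 0
    · rw [if_neg hi', updateRow_ne hi']
      exact hM i' l
  convert isHomogeneous_det_of_rows _ hrows using 1
  simp [Finset.sum_ite, Finset.filter_ne']

variable [Fintype m] [DecidableEq m]

/-- `det (Mᵀ M) • (1 - M (Mᵀ M)⁻¹ Mᵀ)` with the inverse cleared by the adjugate, so that it is
polynomial in the entries of `M`. -/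
def gramComplement (M : Matrix m n R) : Matrix m m R :=
  (Mᵀ * M).det • 1 - M * (Mᵀ * M).adjugate * Mᵀ

theorem gramComplement_map {S : Type*} [CommRing S] (M : Matrix m n R) (f : R →+* S) :
    (M.map f).gramComplement = M.gramComplement.map f := by
  have hgram : (M.map f)ᵀ * M.map f = f.mapMatrix (Mᵀ * M) := by
    simp [Matrix.map_mul, transpose_map]
  rw [gramComplement, gramComplement, hgram, ← RingHom.map_det, ← RingHom.map_adjugate]
  simp [Matrix.map_sub, Matrix.map_mul, transpose_map, smul_one_eq_diagonal]

theorem isHomogeneous_gramComplement {σ : Type*} {M : Matrix m n (MvPolynomial σ R)} {k : ℕ}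
    (hM : ∀ i j, (M i j).IsHomogeneous k) (i j : m) :
    (M.gramComplement i j).IsHomogeneous (2 * k * Fintype.card n) := by
  have hMt : ∀ i j, (Mᵀ i j).IsHomogeneous k := fun i j => hM j i
  have hgram : ∀ i j, ((Mᵀ * M) i j).IsHomogeneous (2 * k) := by
    simpa [two_mul] using isHomogeneous_mul hMt hM
  refine IsHomogeneous.sub ?_ ?_
  · by_cases hij : i = j
    · simpa [hij, mul_comm] using isHomogeneous_det hgram
    · simpa [hij] using isHomogeneous_zero σ R _
  · rcases isEmpty_or_nonempty n with hn | hn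
    · simpa [mul_apply] using isHomogeneous_zero σ R _
    · have hdeg : k + (Fintype.card n - 1) * (2 * k) + k = 2 * k * Fintype.card n := by
        obtain ⟨r, hr⟩ := Nat.exists_eq_add_one_of_ne_zero (Fintype.card_ne_zero (α := n))
        rw [hr, Nat.add_sub_cancel]
        ring
      rw [← hdeg]
      exact isHomogeneous_mul (isHomogeneous_mul hM (isHomogeneous_adjugate hgram)) hMt i j

end Matrix

open MvPolynomial in
theorem Module.Basis.exists_isHomogeneous_toMatrix_eq_eval {σ R M ι κ : Type*} [CommRing R]
    [AddCommGroup M] [Module R M] [Fintype ι] [DecidableEq ι] [Fintype κ] [DecidableEq κ]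
    (b : Module.Basis ι R M) (c : Module.Basis κ R M) {Q : Matrix κ κ (MvPolynomial σ R)} {a : ℕ}
    (hQ : ∀ i j, (Q i j).IsHomogeneous a) :
    ∃ P : Matrix ι ι (MvPolynomial σ R), (∀ i j, (P i j).IsHomogeneous a) ∧
      ∀ (x : σ → R) (f : M →ₗ[R] M), LinearMap.toMatrix c c f = Q.map (eval x) →
        LinearMap.toMatrix b b f = P.map (eval x) := by
  let C' : R →+* MvPolynomial σ R := C
  refine ⟨(b.toMatrix c).map C' * Q * (c.toMatrix b).map C', fun i j => ?_, fun x f hf => ?_⟩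
  · have h := Matrix.isHomogeneous_mul (N := (c.toMatrix b).map C')
      (Matrix.isHomogeneous_mul (M := (b.toMatrix c).map C') (fun _ _ => isHomogeneous_C σ _) hQ)
      (fun _ _ => isHomogeneous_C σ _) i j
    rwa [zero_add, add_zero] at h
  · have hevalC : (eval x).comp C' = RingHom.id R := by ext; simp [C']
    rw [← basis_toMatrix_mul_linearMap_toMatrix_mul_basis_toMatrix b c b c, hf, Matrix.map_mul,
      Matrix.map_mul, Matrix.map_map, Matrix.map_map, ← RingHom.coe_comp, hevalC]
    simp

namespace ContinuousLinearMap

open Matrix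

variable {V E : Type*} [NormedAddCommGroup V] [InnerProductSpace ℝ V] [FiniteDimensional ℝ V]
  [NormedAddCommGroup E] [InnerProductSpace ℝ E] [FiniteDimensional ℝ E]

/-- For injective `S`, `1 - S (S†S)⁻¹ S†` is the orthogonal projection onto `(range S)ᗮ`. -/
noncomputable def gramComplement (S : V →L[ℝ] E) : E →L[ℝ] E :=
  LinearMap.det ((adjoint S ∘L S : V →L[ℝ] V) : V →ₗ[ℝ] V) •
    (ContinuousLinearMap.id ℝ E - S ∘L (Ring.inverse (adjoint S ∘L S) ∘L adjoint S))

theorem isUnit_adjoint_comp_self {S : V →L[ℝ] E} (hS : LinearMap.ker (S : V →ₗ[ℝ] E) = ⊥) :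
    IsUnit (adjoint S ∘L S) := by
  rwa [isUnit_iff_isUnit_toLinearMap, LinearMap.isUnit_iff_ker_eq_bot, ker_adjoint_comp_self]

theorem ker_gramComplement {S : V →L[ℝ] E} (hS : LinearMap.ker (S : V →ₗ[ℝ] E) = ⊥) :
    LinearMap.ker (gramComplement S : E →ₗ[ℝ] E) = LinearMap.range (S : V →ₗ[ℝ] E) := by
  have hunit := isUnit_adjoint_comp_self hS
  have hdet : LinearMap.det ((adjoint S ∘L S : V →L[ℝ] V) : V →ₗ[ℝ] V) ≠ 0 :=
    (LinearMap.isUnit_det _ (isUnit_iff_isUnit_toLinearMap.mp hunit)).ne_zero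
  rw [gramComplement, toLinearMap_smul, LinearMap.ker_smul _ _ hdet]
  ext e
  have hproj : (ContinuousLinearMap.id ℝ E - S ∘L (Ring.inverse (adjoint S ∘L S) ∘L adjoint S)) e
      = e - S (Ring.inverse (adjoint S ∘L S) (adjoint S e)) := rfl
  rw [LinearMap.mem_ker, coe_coe, hproj, sub_eq_zero]
  constructor
  · intro he
    exact ⟨_, he.symm⟩
  · rintro ⟨v, rfl⟩
    rw [coe_coe, ← comp_apply (adjoint S) S, ← mul_apply_eq_comp, Ring.inverse_mul_cancel _ hunit,
      one_apply_eq_self]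

theorem toMatrix_gramComplement {ιV ιE : Type*} [Fintype ιV] [DecidableEq ιV] [Fintype ιE]
    [DecidableEq ιE] (d : OrthonormalBasis ιV ℝ V) (c : OrthonormalBasis ιE ℝ E) {S : V →L[ℝ] E}
    (hS : LinearMap.ker (S : V →ₗ[ℝ] E) = ⊥) :
    LinearMap.toMatrix c.toBasis c.toBasis (gramComplement S : E →ₗ[ℝ] E)
      = (LinearMap.toMatrix d.toBasis c.toBasis (S : V →ₗ[ℝ] E)).gramComplement := by
  set T := LinearMap.toMatrix d.toBasis c.toBasis (S : V →ₗ[ℝ] E)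
  have hadj : LinearMap.toMatrix c.toBasis d.toBasis (adjoint S : E →ₗ[ℝ] V) = Tᵀ := by
    rw [← adjoint_toLinearMap, LinearMap.toMatrix_adjoint]
    exact conjTranspose_eq_transpose_of_trivial T
  have hgram : LinearMap.toMatrix d.toBasis d.toBasis ((adjoint S ∘L S : V →L[ℝ] V) : V →ₗ[ℝ] V)
      = Tᵀ * T := by
    rw [toLinearMap_comp, LinearMap.toMatrix_comp _ c.toBasis, hadj]
  have hleft : LinearMap.toMatrix d.toBasis d.toBasis
      ((Ring.inverse (adjoint S ∘L S) : V →L[ℝ] V) : V →ₗ[ℝ] V) * (Tᵀ * T) = 1 := by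
    rw [← hgram, ← LinearMap.toMatrix_comp, ← toLinearMap_comp, ← mul_def,
      Ring.inverse_mul_cancel _ (isUnit_adjoint_comp_self hS)]
    exact LinearMap.toMatrix_id _
  have hadjugate : (Tᵀ * T).det • (Tᵀ * T)⁻¹ = (Tᵀ * T).adjugate := by
    rw [inv_def, smul_smul, Ring.mul_inverse_cancel _ (isUnit_det_of_left_inverse hleft), one_smul]
  have hdet : LinearMap.det ((adjoint S ∘L S : V →L[ℝ] V) : V →ₗ[ℝ] V) = (Tᵀ * T).det := by
    rw [← LinearMap.det_toMatrix d.toBasis, hgram]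
  rw [gramComplement, toLinearMap_smul, map_smul, hdet, toLinearMap_sub, map_sub,
    ContinuousLinearMap.coe_id, LinearMap.toMatrix_id, toLinearMap_comp,
    LinearMap.toMatrix_comp _ d.toBasis, toLinearMap_comp, LinearMap.toMatrix_comp _ d.toBasis,
    hadj, ← inv_eq_left_inv hleft, Matrix.gramComplement, ← hadjugate, Matrix.mul_smul, Matrix.smul_mul,
    Matrix.mul_assoc, smul_sub]

end ContinuousLinearMap

section SymbolMatrix

open MvPolynomial

variable {n k : ℕ} {V E : Type*} [NormedAddCommGroup V] [NormedSpace ℝ V]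
  [NormedAddCommGroup E] [NormedSpace ℝ E]

noncomputable def tensorMonomial (f : Fin k → Fin n) (v : V) :
    ContinuousMultilinearMap ℝ (fun _ : Fin k => EuclideanSpace ℝ (Fin n)) V :=
  (ContinuousMultilinearMap.mkPiRing ℝ (Fin k) v).compContinuousLinearMap
    (fun l => innerSL ℝ (EuclideanSpace.single (f l) (1 : ℝ)))

theorem tensorPow_eq_sum (ξ : EuclideanSpace ℝ (Fin n)) (v : V) :
    tensorPow k ξ v = ∑ f : Fin k → Fin n, (∏ l, ξ (f l)) • tensorMonomial f v := by
  ext m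
  have hinner : ∀ l, inner ℝ ξ (m l) = ∑ t, ξ t * m l t := fun l => by
    simp [PiLp.inner_apply, mul_comm]
  simp only [tensorPow, tensorMonomial, LinearMap.coe_mk, AddHom.coe_mk,
    ContinuousMultilinearMap.compContinuousLinearMap_apply, ContinuousMultilinearMap.mkPiRing_apply,
    _root_.sum_apply, _root_.smul_apply, innerSL_apply_apply, EuclideanSpace.inner_single_left,
    map_one, one_mul, hinner, Finset.prod_univ_sum, Fintype.piFinset_univ, Finset.sum_smul,
    Finset.prod_mul_distrib, mul_smul]

variable (A : ContinuousMultilinearMap ℝ (fun _ : Fin k => EuclideanSpace ℝ (Fin n)) V →ₗ[ℝ] E)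
  {ιV ιE : Type*} (bV : Module.Basis ιV ℝ V) (bE : Module.Basis ιE ℝ E)

noncomputable def symbolMatrix : Matrix ιE ιV (MvPolynomial (Fin n) ℝ) :=
  fun i j => ∑ f : Fin k → Fin n, C (bE.repr (A (tensorMonomial f (bV j))) i) * ∏ l, X (f l)

theorem isHomogeneous_symbolMatrix (i : ιE) (j : ιV) :
    (symbolMatrix A bV bE i j).IsHomogeneous k := by
  refine IsHomogeneous.sum _ _ _ fun f _ => IsHomogeneous.C_mul ?_ _
  simpa using IsHomogeneous.prod Finset.univ _ (fun _ => 1) fun l _ => isHomogeneous_X ℝ (f l)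

theorem symbolMatrix_map_eval [Fintype ιV] [DecidableEq ιV] [Fintype ιE]
    (ξ : EuclideanSpace ℝ (Fin n)) :
    (symbolMatrix A bV bE).map (eval fun t => ξ t) = LinearMap.toMatrix bV bE (symbol A ξ) := by
  ext i j
  simp only [symbolMatrix, symbol, Matrix.map_apply, LinearMap.toMatrix_apply, LinearMap.comp_apply,
    tensorPow_eq_sum, map_sum, map_smul, eval_mul, eval_C, eval_prod, eval_X, Finsupp.coe_finsetSum,
    Finset.sum_apply, Finsupp.smul_apply, smul_eq_mul, mul_comm]

end SymbolMatrix

open MvPolynomial in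
theorem toMatrix_cocSymbol {n k : ℕ} {V E : Type*}
    [NormedAddCommGroup V] [InnerProductSpace ℝ V] [FiniteDimensional ℝ V]
    [NormedAddCommGroup E] [InnerProductSpace ℝ E] [FiniteDimensional ℝ E]
    (A : ContinuousMultilinearMap ℝ (fun _ : Fin k => EuclideanSpace ℝ (Fin n)) V →ₗ[ℝ] E)
    {ιV ιE : Type*} [Fintype ιV] [DecidableEq ιV] [Fintype ιE] [DecidableEq ιE]
    (d : OrthonormalBasis ιV ℝ V) (c : OrthonormalBasis ιE ℝ E) {ξ : EuclideanSpace ℝ (Fin n)}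
    (hξ : LinearMap.ker (symbol A ξ) = ⊥) :
    LinearMap.toMatrix c.toBasis c.toBasis (cocSymbol A ξ : E →ₗ[ℝ] E)
      = (symbolMatrix A d.toBasis c.toBasis).gramComplement.map (eval fun t => ξ t) := by
  rw [← Matrix.gramComplement_map, symbolMatrix_map_eval]
  exact ContinuousLinearMap.toMatrix_gramComplement d c hξ

theorem stmt5_general {n k : ℕ}
    {V E : Type*} [NormedAddCommGroup V] [InnerProductSpace ℝ V] [FiniteDimensional ℝ V]
    [NormedAddCommGroup E] [InnerProductSpace ℝ E] [FiniteDimensional ℝ E]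
    (A : ContinuousMultilinearMap ℝ (fun _ : Fin k => EuclideanSpace ℝ (Fin n)) V →ₗ[ℝ] E)
    (hA : ∀ ξ : EuclideanSpace ℝ (Fin n), ξ ≠ 0 → LinearMap.ker (symbol A ξ) = ⊥) :
    (∀ (ι : Type) [Fintype ι] [DecidableEq ι] (b : Module.Basis ι ℝ E) (i j : ι),
      ∃ P : MvPolynomial (Fin n) ℝ, P.IsHomogeneous (2 * k * Module.finrank ℝ V) ∧
        ∀ ξ : EuclideanSpace ℝ (Fin n), ξ ≠ 0 →
          LinearMap.toMatrix b b ((cocSymbol A ξ : E →L[ℝ] E) : E →ₗ[ℝ] E) i j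
            = MvPolynomial.eval (fun t => ξ t) P)
    ∧ (∀ ξ : EuclideanSpace ℝ (Fin n), ξ ≠ 0 →
        LinearMap.ker ((cocSymbol A ξ : E →L[ℝ] E) : E →ₗ[ℝ] E)
          = LinearMap.range (symbol A ξ)) := by
  refine ⟨fun ι _ _ b i j => ?_, fun ξ hξ => ContinuousLinearMap.ker_gramComplement (hA ξ hξ)⟩
  let d := stdOrthonormalBasis ℝ V
  let c := stdOrthonormalBasis ℝ E
  obtain ⟨P, hP, hPeval⟩ := b.exists_isHomogeneous_toMatrix_eq_eval c.toBasis
    (Matrix.isHomogeneous_gramComplement (isHomogeneous_symbolMatrix A d.toBasis c.toBasis))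
  refine ⟨P i j, by simpa using hP i j, fun ξ hξ => ?_⟩
  rw [hPeval _ _ (toMatrix_cocSymbol A d c (hA ξ hξ)), Matrix.map_apply]

/-- For an injectively elliptic operator `A(D)`, the map `L(ξ)` (i) has matrix entries, in any
basis of `E`, given by homogeneous polynomials of degree `2 k dim V` in `ξ`, and
(ii) satisfies `ker L(ξ) = range A(ξ)` for every `ξ ≠ 0`. -/
theorem stmt5 {n k : ℕ} (hn : 1 ≤ n) (hk : 1 ≤ k)
    {V E : Type*} [NormedAddCommGroup V] [InnerProductSpace ℝ V] [FiniteDimensional ℝ V]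
    [NormedAddCommGroup E] [InnerProductSpace ℝ E] [FiniteDimensional ℝ E]
    (A : ContinuousMultilinearMap ℝ (fun _ : Fin k => EuclideanSpace ℝ (Fin n)) V →ₗ[ℝ] E)
    (hA : ∀ ξ : EuclideanSpace ℝ (Fin n), ξ ≠ 0 → LinearMap.ker (symbol A ξ) = ⊥) :
    (∀ (ι : Type) [Fintype ι] [DecidableEq ι] (b : Module.Basis ι ℝ E) (i j : ι),
      ∃ P : MvPolynomial (Fin n) ℝ, P.IsHomogeneous (2 * k * Module.finrank ℝ V) ∧
        ∀ ξ : EuclideanSpace ℝ (Fin n), ξ ≠ 0 →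
          LinearMap.toMatrix b b ((cocSymbol A ξ : E →L[ℝ] E) : E →ₗ[ℝ] E) i j
            = MvPolynomial.eval (fun t => ξ t) P)
    ∧ (∀ ξ : EuclideanSpace ℝ (Fin n), ξ ≠ 0 →
        LinearMap.ker ((cocSymbol A ξ : E →L[ℝ] E) : E →ₗ[ℝ] E)
          = LinearMap.range (symbol A ξ)) :=
  stmt5_general A hA
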